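/- arXiv:2012.05420 — 3 statements merged into one kernel-verified Lean document; each statement's English description precedes it below -/
import Mathlib

section
/- The function Φ_j(z) = log(∑_{i=1}^k exp(z_i)) − z_j is strictly convex on any hyperplane H_α = {z ∈ ℝ^k : ∑_{i=1}^k z_i = α}; i.e., for distinct z, w ∈ H_α and t ∈ (0,1), Φ_j(t·z + (1−t)·w) < t·Φ_j(z) + (1−t)·Φ_j(w). -/
/-!
Log-sum-exp shifts by `c` when its argument shifts by `c • (1, …, 1)`, so after subtracting
`logSumExp z` and `logSumExp w` both points have `∑ i, exp (·) = 1`, and strict convexity of `exp`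
makes log-sum-exp strictly convex along every direction outside `ℝ • (1, …, 1)`. Two distinct
points of `H_α` never differ by such a direction, and `-z_j` is linear.
-/

open Real Finset

section LogSumExp

variable {ι : Type*} [Fintype ι]

noncomputable def logSumExp (z : ι → ℝ) : ℝ := log (∑ i, exp (z i))

theorem logSumExp_sub_const [Nonempty ι] (z : ι → ℝ) (c : ℝ) :
    logSumExp (fun i => z i - c) = logSumExp z - c := by
  simp only [logSumExp, exp_sub, ← sum_div]
  rw [log_div (by positivity) (exp_pos c).ne', log_exp]

theorem sum_exp_sub_logSumExp [Nonempty ι] (z : ι → ℝ) : ∑ i, exp (z i - logSumExp z) = 1 := by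
  simp only [exp_sub, ← sum_div, logSumExp, exp_log (by positivity : 0 < ∑ i, exp (z i))]
  exact div_self (by positivity)

theorem sum_exp_convex_comb_lt_one {a b : ι → ℝ} (ha : ∑ i, exp (a i) = 1)
    (hb : ∑ i, exp (b i) = 1) (hab : a ≠ b) {t : ℝ} (ht0 : 0 < t) (ht1 : t < 1) :
    ∑ i, exp (t * a i + (1 - t) * b i) < 1 := by
  obtain ⟨i₀, hi₀⟩ := Function.ne_iff.1 hab
  have hconv {i : ι} (h : a i ≠ b i) :
      exp (t * a i + (1 - t) * b i) < t * exp (a i) + (1 - t) * exp (b i) :=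
    strictConvexOn_exp.2 (Set.mem_univ _) (Set.mem_univ _) h ht0 (sub_pos.2 ht1) (by ring)
  calc ∑ i, exp (t * a i + (1 - t) * b i) < ∑ i, (t * exp (a i) + (1 - t) * exp (b i)) := by
        refine sum_lt_sum (fun i _ => ?_) ⟨i₀, mem_univ _, hconv hi₀⟩
        rcases eq_or_ne (a i) (b i) with h | h
        · simp [h, ← add_mul]
        · exact (hconv h).le
    _ = 1 := by rw [sum_add_distrib, ← mul_sum, ← mul_sum, ha, hb]; ring

theorem logSumExp_convex_comb_lt {z w : ι → ℝ} (hzw : ∀ c : ℝ, z ≠ fun i => w i + c)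
    {t : ℝ} (ht0 : 0 < t) (ht1 : t < 1) :
    logSumExp (fun i => t * z i + (1 - t) * w i) < t * logSumExp z + (1 - t) * logSumExp w := by
  have : Nonempty ι := by
    by_contra h
    exact hzw 0 (funext fun i => (h ⟨i⟩).elim)
  set a : ι → ℝ := fun i => z i - logSumExp z
  set b : ι → ℝ := fun i => w i - logSumExp w
  have hab : a ≠ b := fun h => hzw (logSumExp z - logSumExp w) <| funext fun i => by
    have := congrFun h i
    simp only [a, b] at this
    linarith
  have hlt :=
    sum_exp_convex_comb_lt_one (sum_exp_sub_logSumExp z) (sum_exp_sub_logSumExp w) hab ht0 ht1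
  have hshift := logSumExp_sub_const (fun i => t * z i + (1 - t) * w i)
    (t * logSumExp z + (1 - t) * logSumExp w)
  have hcentered :
      (fun i => t * z i + (1 - t) * w i - (t * logSumExp z + (1 - t) * logSumExp w))
        = fun i => t * a i + (1 - t) * b i := by
    funext i; simp only [a, b]; ring
  rw [hcentered] at hshift
  have : logSumExp (fun i => t * a i + (1 - t) * b i) < 0 :=
    log_neg (by positivity) hlt
  linarith

theorem eq_of_sum_eq_of_eq_add_const [Nonempty ι] {z w : ι → ℝ} {c : ℝ}
    (hsum : ∑ i, z i = ∑ i, w i) (hzw : z = fun i => w i + c) : z = w := by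
  have : (Fintype.card ι : ℝ) * c = 0 := by
    subst hzw
    simpa [sum_add_distrib] using hsum
  have hc : c = 0 := (mul_eq_zero.1 this).resolve_left (by positivity)
  simpa [hc] using hzw

end LogSumExp

/-- `Φ_j` is strictly convex on every hyperplane `H_α = {z : ∑ i, z i = α}`. -/
theorem softmax_cross_entropy_strictly_convex_on_hyperplane (k : ℕ) (j : Fin k) (α : ℝ)
    (z w : Fin k → ℝ) (hz : ∑ i, z i = α) (hw : ∑ i, w i = α) (hzw : z ≠ w)
    (t : ℝ) (ht0 : 0 < t) (ht1 : t < 1) :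
    Real.log (∑ i, Real.exp (t * z i + (1 - t) * w i)) - (t * z j + (1 - t) * w j)
      < t * (Real.log (∑ i, Real.exp (z i)) - z j)
        + (1 - t) * (Real.log (∑ i, Real.exp (w i)) - w j) := by
  have : Nonempty (Fin k) := ⟨j⟩
  have hnonconst : ∀ c : ℝ, z ≠ fun i => w i + c := fun c h =>
    hzw (eq_of_sum_eq_of_eq_add_const (hz.trans hw.symm) h)
  have := logSumExp_convex_comb_lt hnonconst ht0 ht1
  simp only [logSumExp] at this
  linarith
end

section
/- Fix R > 0, k ≥ 2, and i ∈ {1,...,k}. The function Φ_i(z) = log(∑_{j=1}^k exp(z_j)) − z_i attains a unique minimum over the closed Euclidean ball {z ∈ ℝ^k : ‖z‖_2 ≤ R}, and the minimizer z* has the form z* = α·e_i + β·∑_{j≠i} e_j for some real numbers α, β. -/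
/-!
`Φᵢ` is convex with gradient `softmax z - eᵢ`. The point `z = a • (k • eᵢ - 𝟙)` with
`a = R / √(k (k - 1))` lies on the sphere of radius `R`, and since the softmax weights of its
coordinates other than `i` are all equal and sum with the `i`-th to `1`, it satisfies the
Lagrange condition `softmax z - eᵢ = μ • z` with `μ < 0`. The gradient inequality then gives
`Φᵢ w - Φᵢ z ≥ μ ⟪z, w - z⟫ ≥ 0` whenever `‖w‖ ≤ ‖z‖`. Equality forces equality in Jensen's
inequality for `exp`, so `w = z + m • 𝟙`; as the coordinates of `z` sum to `0`,
`‖w‖² = R² + k m²`, whence `m = 0`.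
-/

open Finset Real
open scoped InnerProductSpace

namespace Softmax

variable {ι : Type*} [Fintype ι]

noncomputable def softmax (z : ι → ℝ) (j : ι) : ℝ := exp (z j) / ∑ l, exp (z l)

noncomputable def softmaxLoss (i : ι) (z : ι → ℝ) : ℝ := log (∑ j, exp (z j)) - z i

section Nonempty

variable [Nonempty ι]

lemma sum_exp_pos (z : ι → ℝ) : 0 < ∑ j, exp (z j) :=
  sum_pos (fun j _ ↦ exp_pos (z j)) univ_nonempty

lemma softmax_pos (z : ι → ℝ) (j : ι) : 0 < softmax z j :=
  div_pos (exp_pos _) (sum_exp_pos z)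

lemma sum_softmax (z : ι → ℝ) : ∑ j, softmax z j = 1 := by
  simp only [softmax, ← sum_div, div_self (sum_exp_pos z).ne']

lemma sum_exp_eq_mul_sum_softmax_mul_exp (z w : ι → ℝ) :
    ∑ j, exp (w j) = (∑ j, exp (z j)) * ∑ j, softmax z j * exp (w j - z j) := by
  rw [mul_sum]
  refine sum_congr rfl fun j _ ↦ ?_
  rw [softmax, exp_sub]
  field_simp [(sum_exp_pos z).ne', exp_ne_zero]

lemma exp_sum_softmax_mul_le (z d : ι → ℝ) :
    exp (∑ j, softmax z j * d j) ≤ ∑ j, softmax z j * exp (d j) := by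
  simpa only [smul_eq_mul] using convexOn_exp.map_sum_le (t := univ) (p := d)
    (fun j _ ↦ (softmax_pos z j).le) (sum_softmax z) (fun _ _ ↦ Set.mem_univ _)

lemma log_sum_exp_add_sum_softmax_mul_le (z w : ι → ℝ) :
    log (∑ j, exp (z j)) + ∑ j, softmax z j * (w j - z j) ≤ log (∑ j, exp (w j)) := by
  have jensen := exp_sum_softmax_mul_le z (fun j ↦ w j - z j)
  have hT := lt_of_lt_of_le (exp_pos _) jensen
  rw [sum_exp_eq_mul_sum_softmax_mul_exp z w, log_mul (sum_exp_pos z).ne' hT.ne']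
  gcongr
  exact (le_log_iff_exp_le hT).2 jensen

lemma eq_add_sum_softmax_mul_of_log_sum_exp_le {z w : ι → ℝ}
    (h : log (∑ j, exp (w j)) ≤ log (∑ j, exp (z j)) + ∑ j, softmax z j * (w j - z j)) (j : ι) :
    w j = z j + ∑ l, softmax z l * (w l - z l) := by
  have jensen := exp_sum_softmax_mul_le z (fun j ↦ w j - z j)
  have hT := lt_of_lt_of_le (exp_pos _) jensen
  rw [sum_exp_eq_mul_sum_softmax_mul_exp z w, log_mul (sum_exp_pos z).ne' hT.ne',
    add_le_add_iff_left, ← exp_le_exp, exp_log hT] at h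
  have hconst := (strictConvexOn_exp.map_sum_eq_iff (t := univ) (p := fun j ↦ w j - z j)
    (fun j _ ↦ softmax_pos z j) (sum_softmax z) (fun _ _ ↦ Set.mem_univ _)).1
    (by simpa only [smul_eq_mul] using le_antisymm jensen h) j (mem_univ j)
  simp only [smul_eq_mul] at hconst
  linarith

end Nonempty

lemma sum_mul_sub_nonpos_of_norm_le {z w : EuclideanSpace ℝ ι} (hw : ‖w‖ ≤ ‖z‖) :
    ∑ j, z j * (w j - z j) ≤ 0 := by
  have hinner : ∑ j, z j * (w j - z j) = ⟪w - z, z⟫_ℝ := by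
    simp [PiLp.inner_apply]
  rw [hinner, inner_sub_left, real_inner_self_eq_norm_sq, sq, sub_nonpos]
  exact (real_inner_le_norm w z).trans (mul_le_mul_of_nonneg_right hw (norm_nonneg z))

variable [DecidableEq ι] {i : ι} {μ : ℝ} {z w : EuclideanSpace ℝ ι}

lemma sum_softmax_mul_sub_eq (hgrad : ∀ j, softmax z j = (if j = i then 1 else 0) + μ * z j)
    (w : EuclideanSpace ℝ ι) :
    ∑ j, softmax z j * (w j - z j) = (w i - z i) + μ * ∑ j, z j * (w j - z j) := by
  simp only [hgrad, add_mul, sum_add_distrib, ite_mul, one_mul, zero_mul, sum_ite_eq',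
    mem_univ, if_true, mul_sum, mul_assoc]

lemma softmaxLoss_le_of_softmax_eq (hμ : μ ≤ 0)
    (hgrad : ∀ j, softmax z j = (if j = i then 1 else 0) + μ * z j) (hw : ‖w‖ ≤ ‖z‖) :
    softmaxLoss i z ≤ softmaxLoss i w := by
  have : Nonempty ι := ⟨i⟩
  have hconvex := log_sum_exp_add_sum_softmax_mul_le z w
  have hcross := mul_nonneg_of_nonpos_of_nonpos hμ (sum_mul_sub_nonpos_of_norm_le hw)
  rw [sum_softmax_mul_sub_eq hgrad] at hconvex
  unfold softmaxLoss
  linarith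

lemma eq_of_softmaxLoss_le (hμ : μ < 0)
    (hgrad : ∀ j, softmax z j = (if j = i then 1 else 0) + μ * z j) (hw : ‖w‖ ≤ ‖z‖)
    (hle : softmaxLoss i w ≤ softmaxLoss i z) : w = z := by
  have : Nonempty ι := ⟨i⟩
  have hsum : ∑ j, z j = 0 := by
    have h := sum_softmax (ι := ι) z
    simp only [hgrad, sum_add_distrib, sum_ite_eq', mem_univ, if_true, ← mul_sum] at h
    exact (mul_eq_zero.1 (by linarith)).resolve_left hμ.ne
  have hcross := mul_nonneg_of_nonpos_of_nonpos hμ.le (sum_mul_sub_nonpos_of_norm_le hw)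
  set m := ∑ l, softmax z l * (w l - z l)
  have hshift : ∀ j, w j = z j + m := eq_add_sum_softmax_mul_of_log_sum_exp_le <| by
    unfold softmaxLoss at hle
    linarith [sum_softmax_mul_sub_eq hgrad w]
  have hnorm : ‖w‖ ^ 2 = ‖z‖ ^ 2 + Fintype.card ι * m ^ 2 := by
    simp only [EuclideanSpace.real_norm_sq_eq, hshift, add_sq, sum_add_distrib, ← sum_mul,
      ← mul_sum, hsum, sum_const, card_univ, nsmul_eq_mul]
    ring
  have hm : m = 0 := by
    by_contra hm
    have hcard : (0 : ℝ) < Fintype.card ι := Nat.cast_pos.2 Fintype.card_pos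
    nlinarith [pow_le_pow_left₀ (norm_nonneg w) hw 2, mul_pos hcard (sq_pos_of_ne_zero hm)]
  ext j
  rw [hshift, hm, add_zero]

noncomputable def centeredSingle (i : ι) (a : ℝ) : EuclideanSpace ℝ ι :=
  WithLp.toLp 2 fun j ↦ if j = i then (Fintype.card ι - 1) * a else -a

lemma norm_centeredSingle_sq (i : ι) (a : ℝ) :
    ‖centeredSingle i a‖ ^ 2 = Fintype.card ι * (Fintype.card ι - 1) * a ^ 2 := by
  have hsq : ∀ j, (centeredSingle i a j) ^ 2
      = a ^ 2 + if j = i then (((Fintype.card ι : ℝ) - 1) ^ 2 - 1) * a ^ 2 else 0 := by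
    intro j
    simp only [centeredSingle]
    split_ifs <;> ring
  simp only [EuclideanSpace.real_norm_sq_eq, hsq, sum_add_distrib, sum_ite_eq', mem_univ, if_true,
    sum_const, card_univ, nsmul_eq_mul]
  ring

lemma exists_softmax_centeredSingle_eq (i : ι) {a : ℝ} (ha : 0 < a) :
    ∃ μ < 0, ∀ j, softmax (centeredSingle i a) j
      = (if j = i then 1 else 0) + μ * centeredSingle i a j := by
  have : Nonempty ι := ⟨i⟩
  set z := centeredSingle i a
  set q := exp (-a) / ∑ l, exp (z l)
  have hoff : ∀ j, j ≠ i → softmax z j = q := fun j hj ↦ by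
    simp only [softmax, q, z, centeredSingle, if_neg hj]
  have hdiag : softmax z i = 1 - (Fintype.card ι - 1) * q := by
    have hsum : ∑ j, (softmax z j - q) = softmax z i - q :=
      sum_eq_single i (fun j _ hj ↦ sub_eq_zero.2 (hoff j hj)) (fun h ↦ (h (mem_univ i)).elim)
    rw [sum_sub_distrib, sum_softmax, sum_const, card_univ, nsmul_eq_mul] at hsum
    linarith
  refine ⟨-q / a, div_neg_of_neg_of_pos (neg_neg_of_pos (div_pos (exp_pos _) (sum_exp_pos z))) ha,
    fun j ↦ ?_⟩
  have hz : ∀ j, z j = if j = i then (Fintype.card ι - 1) * a else -a := fun _ ↦ rfl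
  by_cases hj : j = i
  · rw [hj, hdiag, hz, if_pos rfl, if_pos rfl]
    field_simp
    ring
  · rw [hoff j hj, hz, if_neg hj, if_neg hj, zero_add, neg_div, neg_mul_neg,
      div_mul_cancel₀ q ha.ne']

end Softmax

open Softmax

/-- `Φ_i` has a unique minimizer over the closed Euclidean ball of radius `R`, and the
minimizer has all coordinates other than the `i`-th equal. -/
theorem softmax_unique_minimizer_on_ball (k : ℕ) (hk : 2 ≤ k) (R : ℝ) (hR : 0 < R)
    (i : Fin k) :
    ∃ z : EuclideanSpace ℝ (Fin k), ‖z‖ ≤ R ∧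
      (∀ w : EuclideanSpace ℝ (Fin k), ‖w‖ ≤ R →
        Real.log (∑ j, Real.exp (z j)) - z i ≤ Real.log (∑ j, Real.exp (w j)) - w i) ∧
      (∀ w : EuclideanSpace ℝ (Fin k), ‖w‖ ≤ R →
        (∀ v : EuclideanSpace ℝ (Fin k), ‖v‖ ≤ R →
          Real.log (∑ j, Real.exp (w j)) - w i ≤ Real.log (∑ j, Real.exp (v j)) - v i) →
        w = z) ∧
      ∃ α β : ℝ, ∀ j, z j = if j = i then α else β := by
  have hk' : (0 : ℝ) < k * (k - 1) := by
    have : (2 : ℝ) ≤ k := by exact_mod_cast hk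
    nlinarith
  set a := R / √(k * (k - 1))
  have ha : 0 < a := div_pos hR (sqrt_pos.2 hk')
  set z := centeredSingle i a
  have hz : ‖z‖ = R := by
    rw [← pow_left_inj₀ (norm_nonneg z) hR.le two_ne_zero, norm_centeredSingle_sq,
      Fintype.card_fin, div_pow, sq_sqrt hk'.le]
    exact mul_div_cancel₀ _ hk'.ne'
  obtain ⟨μ, hμ, hgrad⟩ := exists_softmax_centeredSingle_eq i ha
  exact ⟨z, hz.le, fun w hw ↦ softmaxLoss_le_of_softmax_eq hμ.le hgrad (hw.trans hz.ge),
    fun w hw hmin ↦ eq_of_softmaxLoss_le hμ hgrad (hw.trans hz.ge) (hmin z hz.le), _, _,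
    fun _ ↦ rfl⟩
end

section
/- Any minimizer z of Φ_i(z) = log(∑_{j=1}^k exp(z_j)) − z_i over the closed Euclidean ball of radius R > 0 satisfies ‖z‖_2 = R and ∑_{j=1}^k z_j = 0. -/
/-!
Write `Φ w = log (∑ j, exp w_j) - w_i`. Raising the `i`-th coordinate by `t > 0` lowers `Φ`
strictly, because the log-sum-exp grows by less than `t` as soon as some other coordinate exists.
Hence a point `w` strictly inside the ball is beaten by `w + (R - ‖w‖) e_i`, and a minimizer lies
on the sphere. Moreover `Φ` is invariant under shifting all coordinates by a constant, and
subtracting the mean lowers `‖z‖²` by `(∑ j, z_j)² / k`; a minimizer with nonzero coordinate sum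
would thus give an equally good point strictly inside the ball.
-/

open Real

noncomputable section

namespace EuclideanSpace

variable {ι : Type*} [Fintype ι]

def softmaxLoss (i : ι) (w : EuclideanSpace ℝ ι) : ℝ :=
  log (∑ j, exp (w j)) - w i

def meanCenter (w : EuclideanSpace ℝ ι) : EuclideanSpace ℝ ι :=
  WithLp.toLp 2 fun j => w j - (∑ l, w l) / Fintype.card ι

lemma softmaxLoss_sub_const [Nonempty ι] (i : ι) (w : EuclideanSpace ℝ ι) (c : ℝ) :
    softmaxLoss i (WithLp.toLp 2 fun j => w j - c) = softmaxLoss i w := by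
  have hpos : 0 < ∑ j, exp (w j) := Finset.sum_pos (fun j _ => exp_pos _) Finset.univ_nonempty
  have hsum : ∑ j, exp (w j - c) = (∑ j, exp (w j)) / exp c := by
    simp only [exp_sub, Finset.sum_div]
  simp only [softmaxLoss, hsum, log_div hpos.ne' (exp_pos c).ne', log_exp]
  ring

lemma softmaxLoss_meanCenter [Nonempty ι] (i : ι) (w : EuclideanSpace ℝ ι) :
    softmaxLoss i (meanCenter w) = softmaxLoss i w :=
  softmaxLoss_sub_const i w _

lemma norm_sq_meanCenter [Nonempty ι] (w : EuclideanSpace ℝ ι) :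
    ‖meanCenter w‖ ^ 2 = ‖w‖ ^ 2 - (∑ j, w j) ^ 2 / Fintype.card ι := by
  have hn : (Fintype.card ι : ℝ) ≠ 0 := by positivity
  simp only [real_norm_sq_eq, meanCenter, sub_sq, Finset.sum_add_distrib, Finset.sum_sub_distrib,
    ← Finset.sum_mul, ← Finset.mul_sum, Finset.sum_const, Finset.card_univ, nsmul_eq_mul]
  field_simp
  ring

lemma norm_meanCenter_lt [Nonempty ι] {w : EuclideanSpace ℝ ι} (hw : ∑ j, w j ≠ 0) :
    ‖meanCenter w‖ < ‖w‖ := by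
  have : ‖meanCenter w‖ ^ 2 < ‖w‖ ^ 2 := by
    rw [norm_sq_meanCenter]
    have : 0 < (∑ j, w j) ^ 2 / Fintype.card ι := by positivity
    linarith
  exact lt_of_pow_lt_pow_left₀ 2 (norm_nonneg w) this

variable [DecidableEq ι]

lemma softmaxLoss_add_single_lt [Nontrivial ι] (i : ι) (w : EuclideanSpace ℝ ι) {t : ℝ}
    (ht : 0 < t) : softmaxLoss i (w + single i t) < softmaxLoss i w := by
  have hpos : 0 < ∑ j, exp (w j) := Finset.sum_pos (fun j _ => exp_pos _) Finset.univ_nonempty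
  have hsum : ∑ j, exp ((w + single i t) j) < ∑ j, exp (t + w j) := by
    obtain ⟨j, hj⟩ := exists_ne i
    refine Finset.sum_lt_sum (fun l _ => ?_) ⟨j, Finset.mem_univ _, ?_⟩
    · rw [exp_le_exp]
      by_cases hl : l = i
      · simp [hl, add_comm]
      · simp [hl, ht.le]
    · simp [hj, ht]
  have hlog := log_lt_log (Finset.sum_pos (fun j _ => exp_pos _) Finset.univ_nonempty) hsum
  simp only [exp_add, ← Finset.mul_sum, log_mul (exp_pos t).ne' hpos.ne', log_exp] at hlog
  have hi : (w + single i t) i = w i + t := by simp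
  rw [softmaxLoss, softmaxLoss, hi]
  linarith

lemma softmaxLoss_lt_of_isMinOn_closedBall [Nontrivial ι] {i : ι} {R : ℝ}
    {z w : EuclideanSpace ℝ ι} (hmin : IsMinOn (softmaxLoss i) (Metric.closedBall 0 R) z)
    (hw : ‖w‖ < R) : softmaxLoss i z < softmaxLoss i w := by
  have hmem : w + single i (R - ‖w‖) ∈ Metric.closedBall 0 R := by
    rw [mem_closedBall_zero_iff]
    calc ‖w + single i (R - ‖w‖)‖ ≤ ‖w‖ + ‖single i (R - ‖w‖)‖ := norm_add_le _ _
      _ = R := by rw [PiLp.norm_single, Real.norm_of_nonneg (by linarith)]; ring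
  exact (hmin hmem).trans_lt (softmaxLoss_add_single_lt i w (by linarith))

end EuclideanSpace

end

theorem softmax_minimizer_on_sphere_and_hyperplane_general (k : ℕ) (hk : 2 ≤ k) (R : ℝ)
    (i : Fin k) (z : EuclideanSpace ℝ (Fin k)) (hz : ‖z‖ ≤ R)
    (hmin : ∀ w : EuclideanSpace ℝ (Fin k), ‖w‖ ≤ R →
      Real.log (∑ j, Real.exp (z j)) - z i ≤ Real.log (∑ j, Real.exp (w j)) - w i) :
    ‖z‖ = R ∧ ∑ j, z j = 0 := by
  have : Nontrivial (Fin k) := Fin.nontrivial_iff_two_le.mpr hk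
  have hmin' : IsMinOn (EuclideanSpace.softmaxLoss i) (Metric.closedBall 0 R) z :=
    fun w hw => hmin w (mem_closedBall_zero_iff.mp hw)
  have beats_interior {w} (hw : ‖w‖ < R) :=
    EuclideanSpace.softmaxLoss_lt_of_isMinOn_closedBall hmin' hw
  refine ⟨hz.eq_of_not_lt fun hlt => (beats_interior hlt).false, ?_⟩
  by_contra hsum
  have hlt := beats_interior ((EuclideanSpace.norm_meanCenter_lt hsum).trans_le hz)
  exact hlt.ne (EuclideanSpace.softmaxLoss_meanCenter i z).symm

/-- Any minimizer of `Φ_i` over the closed Euclidean ball of radius `R > 0` lies on the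
boundary sphere and in the hyperplane of coordinate-sum zero. -/
theorem softmax_minimizer_on_sphere_and_hyperplane (k : ℕ) (hk : 2 ≤ k) (R : ℝ) (hR : 0 < R)
    (i : Fin k) (z : EuclideanSpace ℝ (Fin k)) (hz : ‖z‖ ≤ R)
    (hmin : ∀ w : EuclideanSpace ℝ (Fin k), ‖w‖ ≤ R →
      Real.log (∑ j, Real.exp (z j)) - z i ≤ Real.log (∑ j, Real.exp (w j)) - w i) :
    ‖z‖ = R ∧ ∑ j, z j = 0 :=
  softmax_minimizer_on_sphere_and_hyperplane_general k hk R i z hz hmin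
end
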